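/- For every symmetric positive definite real 3×3 matrix Σ there exist unique real parameters τ > 0, υ > 0, ρ ∈ (−1,1), α, β ∈ ℝ and σ² > α²τ² such that Σ = [[τ², ρτυ, ατ² + βρτυ], [ρτυ, υ², βυ² + αρτυ], [ατ² + βρτυ, βυ² + αρτυ, σ² + β²υ² + 2ρτυαβ]]. That is, the frugal parameterization (τ², υ², ρ, β, σ², α) of a trivariate Gaussian family is a bijection onto the set of all positive definite 3×3 covariance matrices. -/

import Mathlib

/-!
`frugalCov τ υ ρ α β σsq` is the covariance matrix of `(X₁, X₂, αX₁ + βX₂ + ε)`, where `X₁, X₂` have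
standard deviations `τ, υ` and correlation `ρ`, and `ε` is uncorrelated noise of variance
`σsq - α²τ²`. Accordingly its quadratic form is a weighted sum of three squares, so positive
definiteness forces `ρ² < 1` and `α²τ² < σsq`. Conversely, a symmetric `S` determines `τ, υ, ρ`
from its leading `2 × 2` block, then `(α, β)` as the solution of a linear system of determinant
`τ²υ²(1 - ρ²) = S₀₀S₁₁ - S₀₁² > 0`, and finally `σsq` from `S₂₂`.
-/

open Matrix

def frugalCov (τ υ ρ α β σsq : ℝ) : Matrix (Fin 3) (Fin 3) ℝ :=
  !![τ ^ 2, ρ * τ * υ, α * τ ^ 2 + β * ρ * τ * υ;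
     ρ * τ * υ, υ ^ 2, β * υ ^ 2 + α * ρ * τ * υ;
     α * τ ^ 2 + β * ρ * τ * υ, β * υ ^ 2 + α * ρ * τ * υ,
       σsq + β ^ 2 * υ ^ 2 + 2 * ρ * τ * υ * α * β]

lemma dotProduct_frugalCov_mulVec (τ υ ρ α β σsq x y z : ℝ) :
    ![x, y, z] ⬝ᵥ (frugalCov τ υ ρ α β σsq *ᵥ ![x, y, z]) =
      (τ * (x + α * z) + ρ * υ * (y + β * z)) ^ 2 + (1 - ρ ^ 2) * υ ^ 2 * (y + β * z) ^ 2
        + (σsq - α ^ 2 * τ ^ 2) * z ^ 2 := by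
  simp only [frugalCov, dotProduct, mulVec, Fin.sum_univ_three, of_apply, cons_val',
    cons_val_fin_one, cons_val_zero, cons_val_one, cons_val]
  ring

lemma Matrix.PosDef.frugalCov_constraints {τ υ ρ α β σsq : ℝ} (hτ : τ ≠ 0)
    (h : (frugalCov τ υ ρ α β σsq).PosDef) : ρ ^ 2 < 1 ∧ α ^ 2 * τ ^ 2 < σsq := by
  constructor
  · have hv : ![-(ρ * υ), τ, 0] ≠ 0 := fun hv ↦ hτ (by simpa using congrFun hv 1)
    have hQ := h.dotProduct_mulVec_pos hv
    rw [star_trivial, dotProduct_frugalCov_mulVec] at hQ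
    have hminor : 0 < (1 - ρ ^ 2) * (υ * τ) ^ 2 := by linear_combination hQ
    exact sub_pos.mp (pos_of_mul_pos_left hminor (sq_nonneg _))
  · have hv : ![-α, -β, 1] ≠ 0 := fun hv ↦ by simpa using congrFun hv 2
    have hQ := h.dotProduct_mulVec_pos hv
    rw [star_trivial, dotProduct_frugalCov_mulVec] at hQ
    linear_combination hQ

lemma Matrix.PosDef.sq_apply_lt_diag_mul_diag {n : Type*} [Fintype n] [DecidableEq n]
    {S : Matrix n n ℝ} (hS : S.PosDef) {i j : n} (hij : i ≠ j) : S i j ^ 2 < S i i * S j j := by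
  have hinj : Function.Injective ![i, j] := by
    intro a b; fin_cases a <;> fin_cases b <;> simp [hij, hij.symm]
  have hdet := (hS.submatrix hinj).det_pos
  rw [det_fin_two] at hdet
  simp only [submatrix_apply, cons_val_zero, cons_val_one] at hdet
  have hji : S j i = S i j := by simpa using hS.isHermitian.apply i j
  rw [hji] at hdet
  linear_combination hdet

lemma Matrix.IsSymm.eq_frugalCov {S : Matrix (Fin 3) (Fin 3) ℝ} (hS : S.IsSymm)
    {τ υ ρ α β σsq : ℝ} (h00 : S 0 0 = τ ^ 2) (h01 : S 0 1 = ρ * τ * υ) (h11 : S 1 1 = υ ^ 2)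
    (h02 : S 0 2 = α * τ ^ 2 + β * ρ * τ * υ) (h12 : S 1 2 = β * υ ^ 2 + α * ρ * τ * υ)
    (h22 : S 2 2 = σsq + β ^ 2 * υ ^ 2 + 2 * ρ * τ * υ * α * β) :
    S = frugalCov τ υ ρ α β σsq := by
  rw [eta_fin_three S, hS.apply 0 1, hS.apply 0 2, hS.apply 1 2]
  simp [frugalCov, h00, h01, h11, h02, h12, h22]

lemma Matrix.IsSymm.exists_eq_frugalCov {S : Matrix (Fin 3) (Fin 3) ℝ} (hS : S.IsSymm)
    (h00 : 0 < S 0 0) (h11 : 0 < S 1 1) (hminor : S 0 1 ^ 2 < S 0 0 * S 1 1) :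
    ∃ τ υ ρ α β σsq, 0 < τ ∧ 0 < υ ∧ S = frugalCov τ υ ρ α β σsq := by
  obtain ⟨τ, hτ, hτ2⟩ : ∃ τ : ℝ, 0 < τ ∧ S 0 0 = τ ^ 2 :=
    ⟨√(S 0 0), by positivity, (Real.sq_sqrt h00.le).symm⟩
  obtain ⟨υ, hυ, hυ2⟩ : ∃ υ : ℝ, 0 < υ ∧ S 1 1 = υ ^ 2 :=
    ⟨√(S 1 1), by positivity, (Real.sq_sqrt h11.le).symm⟩
  obtain ⟨ρ, hρ⟩ : ∃ ρ : ℝ, S 0 1 = ρ * τ * υ := ⟨S 0 1 / (τ * υ), by field_simp⟩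
  have hρsq : ρ ^ 2 * (τ * υ) ^ 2 < 1 * (τ * υ) ^ 2 := by
    rw [hτ2, hυ2, hρ] at hminor
    linear_combination hminor
  have hD : 1 - ρ ^ 2 ≠ 0 :=
    (sub_pos.mpr (lt_of_mul_lt_mul_right hρsq (by positivity))).ne'
  obtain ⟨α, β, h02, h12⟩ : ∃ α β : ℝ,
      S 0 2 = α * τ ^ 2 + β * ρ * τ * υ ∧ S 1 2 = β * υ ^ 2 + α * ρ * τ * υ :=
    ⟨(υ ^ 2 * S 0 2 - ρ * τ * υ * S 1 2) / (τ ^ 2 * υ ^ 2 * (1 - ρ ^ 2)),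
      (τ ^ 2 * S 1 2 - ρ * τ * υ * S 0 2) / (τ ^ 2 * υ ^ 2 * (1 - ρ ^ 2)),
      by field_simp; ring, by field_simp; ring⟩
  exact ⟨τ, υ, ρ, α, β, S 2 2 - β ^ 2 * υ ^ 2 - 2 * ρ * τ * υ * α * β, hτ, hυ,
    hS.eq_frugalCov hτ2 hρ hυ2 h02 h12 (by ring)⟩

lemma eq_of_frugalCov_eq {τ υ ρ α β σsq τ' υ' ρ' α' β' σsq' : ℝ}
    (hτ : 0 < τ) (hυ : 0 < υ) (hρ : ρ ^ 2 ≠ 1) (hτ' : 0 < τ') (hυ' : 0 < υ')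
    (h : frugalCov τ' υ' ρ' α' β' σsq' = frugalCov τ υ ρ α β σsq) :
    (τ', υ', ρ', α', β', σsq') = (τ, υ, ρ, α, β, σsq) := by
  have entry (i j : Fin 3) := congrFun (congrFun h i) j
  obtain rfl : τ' = τ :=
    (pow_left_inj₀ hτ'.le hτ.le two_ne_zero).mp (by simpa [frugalCov] using entry 0 0)
  obtain rfl : υ' = υ :=
    (pow_left_inj₀ hυ'.le hυ.le two_ne_zero).mp (by simpa [frugalCov] using entry 1 1)
  obtain rfl : ρ' = ρ := mul_right_cancel₀ (by positivity : τ' * υ' ≠ 0)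
    (by simpa [frugalCov, mul_assoc] using entry 0 1)
  have h02 : α' * τ' ^ 2 + β' * ρ' * τ' * υ' = α * τ' ^ 2 + β * ρ' * τ' * υ' := by
    simpa [frugalCov] using entry 0 2
  have h12 : β' * υ' ^ 2 + α' * ρ' * τ' * υ' = β * υ' ^ 2 + α * ρ' * τ' * υ' := by
    simpa [frugalCov] using entry 1 2
  obtain rfl : α' = α := by
    have : (α' - α) * (τ' ^ 2 * υ' ^ 2 * (1 - ρ' ^ 2)) = 0 := by
      linear_combination υ' ^ 2 * h02 - ρ' * τ' * υ' * h12
    simpa [sub_eq_zero, hτ'.ne', hυ'.ne', Ne.symm hρ] using this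
  obtain rfl : β' = β := by simpa [hυ'.ne'] using h12
  obtain rfl : σsq' = σsq := by simpa [frugalCov] using entry 2 2
  rfl

theorem frugal_gaussian_parameterization_bijective
    (S : Matrix (Fin 3) (Fin 3) ℝ) (hpos : S.PosDef) :
    ∃! q : ℝ × ℝ × ℝ × ℝ × ℝ × ℝ,
      match q with
      | (τ, υ, ρ, α, β, σsq) =>
        0 < τ ∧ 0 < υ ∧ ρ ∈ Set.Ioo (-1 : ℝ) 1 ∧ α ^ 2 * τ ^ 2 < σsq ∧
        S = !![τ ^ 2, ρ * τ * υ, α * τ ^ 2 + β * ρ * τ * υ;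
               ρ * τ * υ, υ ^ 2, β * υ ^ 2 + α * ρ * τ * υ;
               α * τ ^ 2 + β * ρ * τ * υ, β * υ ^ 2 + α * ρ * τ * υ,
                 σsq + β ^ 2 * υ ^ 2 + 2 * ρ * τ * υ * α * β] := by
  obtain ⟨τ, υ, ρ, α, β, σsq, hτ, hυ, rfl⟩ :=
    (isHermitian_iff_isSymm.mp hpos.isHermitian).exists_eq_frugalCov hpos.diag_pos hpos.diag_pos
      (hpos.sq_apply_lt_diag_mul_diag (by decide))
  obtain ⟨hρ, hσ⟩ := hpos.frugalCov_constraints hτ.ne'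
  refine ⟨(τ, υ, ρ, α, β, σsq),
    ⟨hτ, hυ, abs_lt.mp ((sq_lt_one_iff_abs_lt_one ρ).mp hρ), hσ, rfl⟩, ?_⟩
  rintro ⟨τ', υ', ρ', α', β', σsq'⟩ ⟨hτ', hυ', -, -, h⟩
  exact eq_of_frugalCov_eq hτ hυ hρ.ne hτ' hυ' h.symm
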